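/- For all λ ≥ 0, β ∈ (0,1), T > 0 and t ∈ [0,T], the scalar filter inequality e^{tλ}/(1 + β e^{Tλ}) ≤ β^{−t/T} holds, and moreover |e^{tλ} − e^{tλ}/(1 + β e^{Tλ})| = e^{tλ}·βe^{Tλ}/(1+βe^{Tλ}) ≤ β^{(T−t)/T}·e^{Tλ}. -/

import Mathlib

/-- Key scalar lemma: `y ^ θ ≤ 1 + y` for `y > 0`, `θ ∈ [0,1]`. -/
lemma rpow_le_one_add (y θ : ℝ) (hy : 0 < y) (hθ0 : 0 ≤ θ) (hθ1 : θ ≤ 1) :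
    y ^ θ ≤ 1 + y := by
  rcases le_total y 1 with h | h
  · calc y ^ θ ≤ 1 := Real.rpow_le_one hy.le h hθ0
    _ ≤ 1 + y := by linarith
  · calc y ^ θ ≤ y ^ (1:ℝ) := Real.rpow_le_rpow_of_exponent_le h hθ1
    _ = y := Real.rpow_one y
    _ ≤ 1 + y := by linarith

/-- Scalar filter inequalities: boundedness of the regularized filter of order `β^(-t/T)`
and its approximation error against the exact symbol `e^{tλ}` of order `β^((T-t)/T)·e^{Tλ}`. -/
theorem scalar_filter_inequalities (T : ℝ) (hT : 0 < T) (β : ℝ) (hβ : β ∈ Set.Ioo (0:ℝ) 1) :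
    ∀ l ≥ (0:ℝ), ∀ t ∈ Set.Icc (0:ℝ) T,
      Real.exp (t * l) / (1 + β * Real.exp (T * l)) ≤ β ^ (-(t / T)) ∧
      Real.exp (t * l) * (β * Real.exp (T * l)) / (1 + β * Real.exp (T * l)) ≤
        β ^ ((T - t) / T) * Real.exp (T * l) := by
  obtain ⟨hβ0, hβ1⟩ := hβ
  intro l hl t ht
  obtain ⟨ht0, htT⟩ := ht
  set θ : ℝ := t / T with hθdef
  have hθ0 : 0 ≤ θ := div_nonneg ht0 hT.le
  have hθ1 : θ ≤ 1 := (div_le_one hT).mpr htT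
  set x : ℝ := Real.exp (T * l) with hxdef
  have hx : 0 < x := Real.exp_pos _
  have hden : 0 < 1 + β * x := by positivity
  -- exp (t*l) = x ^ θ
  have hexp : Real.exp (t * l) = x ^ θ := by
    rw [hxdef, ← Real.exp_log (Real.exp_pos (T*l)), Real.log_exp, ← Real.exp_mul]
    congr 1
    field_simp [hθdef]
    rw [hθdef]; field_simp
  -- key : x ^ θ ≤ β ^ (-θ) * (1 + β * x)
  have hkey : x ^ θ ≤ β ^ (-θ) * (1 + β * x) := by
    have h1 : (β * x) ^ θ ≤ 1 + β * x :=
      rpow_le_one_add _ _ (by positivity) hθ0 hθ1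
    have h2 : (β * x) ^ θ = β ^ θ * x ^ θ := Real.mul_rpow hβ0.le hx.le
    have hbpos : (0:ℝ) < β ^ θ := Real.rpow_pos_of_pos hβ0 θ
    rw [Real.rpow_neg hβ0.le]
    rw [h2] at h1
    nlinarith [mul_pos hbpos (Real.rpow_pos_of_pos hx θ), inv_pos.mpr hbpos,
      mul_inv_cancel₀ (ne_of_gt hbpos)]
  constructor
  · rw [hexp, div_le_iff₀ hden]
    exact hkey
  · rw [hexp, div_le_iff₀ hden]
    have hsub : (T - t) / T = 1 - θ := by rw [hθdef]; field_simp
    rw [hsub]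
    have hpow : β ^ (1 - θ) = β * β ^ (-θ) := by
      rw [show (1:ℝ) - θ = 1 + (-θ) by ring, Real.rpow_add hβ0, Real.rpow_one]
    rw [hpow]
    have : x ^ θ * (β * x) ≤ (β ^ (-θ) * (1 + β * x)) * (β * x) := by
      apply mul_le_mul_of_nonneg_right hkey (by positivity)
    calc x ^ θ * (β * x) ≤ (β ^ (-θ) * (1 + β * x)) * (β * x) := this
    _ = β * β ^ (-θ) * x * (1 + β * x) := by ring
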